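/- arXiv:1307.4267 — 2 statements merged into one kernel-verified Lean document; each statement's English description precedes it below -/
import Mathlib

section
/- For y, h ∈ E, the Gateaux derivative of J(y) = ∑_{k=1}^{N+2} (p(k)/2)(Δ²y(k-2))² − ∑_{k=1}^{N+1} (q(k)/2)(Δy(k-1))² + ∑_{k=1}^{N} F(k,y(k)) is given by the summation-by-parts identity δJ(y;h) = ∑_{k=1}^{N} [Δ²(p(k)Δ²y(k-2)) + Δ(q(k)Δy(k-1)) + f(k,y(k))]·h(k). -/
open Finset

/-- Forward difference `Δy(k) = y(k+1) - y(k)`. -/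
def fd (y : ℤ → ℝ) (k : ℤ) : ℝ := y (k + 1) - y k

/-- Second forward difference `Δ²y(k) = y(k+2) - 2y(k+1) + y(k)`. -/
def fd2 (y : ℤ → ℝ) (k : ℤ) : ℝ := y (k + 2) - 2 * y (k + 1) + y k

/-- Dirichlet boundary conditions `y(-1) = y(0) = y(N+1) = y(N+2) = 0`. -/
def bc (N : ℕ) (y : ℤ → ℝ) : Prop :=
  y (-1) = 0 ∧ y 0 = 0 ∧ y ((N : ℤ) + 1) = 0 ∧ y ((N : ℤ) + 2) = 0

/-- `y` satisfies `Δ²(p(k)Δ²y(k-2)) + Δ(q(k)Δy(k-1)) + f(k,y(k)) = 0` for `k ∈ Z[1,N]`. -/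
def solves (N : ℕ) (p q : ℤ → ℝ) (f : ℤ → ℝ → ℝ) (y : ℤ → ℝ) : Prop :=
  ∀ k ∈ Finset.Icc (1 : ℤ) (N : ℤ),
    fd2 (fun j => p j * fd2 y (j - 2)) k
      + fd (fun j => q j * fd y (j - 1)) k + f k (y k) = 0

/-- `F(k,s) = ∫₀ˢ f(k,t) dt`. -/
noncomputable def Fint (f : ℤ → ℝ → ℝ) (k : ℤ) (s : ℝ) : ℝ := ∫ t in (0 : ℝ)..s, f k t

/-- The energy functional
`J(y) = ∑_{k=1}^{N+2} (p(k)/2)(Δ²y(k-2))² − ∑_{k=1}^{N+1} (q(k)/2)(Δy(k-1))² + ∑_{k=1}^{N} F(k,y(k))`. -/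
noncomputable def J (N : ℕ) (p q : ℤ → ℝ) (f : ℤ → ℝ → ℝ) (y : ℤ → ℝ) : ℝ :=
  ∑ k ∈ Finset.Icc (1 : ℤ) ((N : ℤ) + 2), p k / 2 * (fd2 y (k - 2)) ^ 2
    - ∑ k ∈ Finset.Icc (1 : ℤ) ((N : ℤ) + 1), q k / 2 * (fd y (k - 1)) ^ 2
    + ∑ k ∈ Finset.Icc (1 : ℤ) (N : ℤ), Fint f k (y k)

/-!
Along the line `ε ↦ y + ε h` every difference term of `J` is a quadratic polynomial in `ε`, and
every `F`-term is differentiable by the fundamental theorem of calculus, so the derivative at `0`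
is `∑ p Δ²y Δ²h - ∑ q Δy Δh + ∑ f(k, y k) h k`. Summation by parts moves the differences from `h`
onto the coefficients; the boundary terms vanish because `h(-1) = h(0) = h(N+1) = h(N+2) = 0`.
-/

lemma bc.apply_eq_zero {N : ℕ} {h : ℤ → ℝ} (hh : bc N h) {k : ℤ}
    (hk : k ∈ Icc (-1) ((N : ℤ) + 2)) (hk' : k ∉ Icc 1 (N : ℤ)) : h k = 0 := by
  obtain ⟨h₁, h₀, hN₁, hN₂⟩ := hh
  simp only [mem_Icc] at hk hk'
  obtain rfl | rfl | rfl | rfl : k = -1 ∨ k = 0 ∨ k = (N : ℤ) + 1 ∨ k = (N : ℤ) + 2 := by omega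
  exacts [h₁, h₀, hN₁, hN₂]

/-- The bounds on `j` and `m` keep the reindexed range `[1 - j, N + m - j]` inside `[-1, N + 2]`,
where `h` vanishes off `[1, N]`. -/
lemma sum_mul_comp_sub_of_bc {N : ℕ} {h : ℤ → ℝ} (hh : bc N h) (g : ℤ → ℝ) {j m : ℤ}
    (hj₀ : 0 ≤ j) (hj₂ : j ≤ 2) (hjm : j ≤ m) (hmj : m ≤ j + 2) :
    ∑ k ∈ Icc 1 ((N : ℤ) + m), g k * h (k - j) = ∑ k ∈ Icc 1 (N : ℤ), g (k + j) * h k := by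
  have hshift : Icc 1 ((N : ℤ) + m) = (Icc (1 - j) (N + m - j)).map (addRightEmbedding j) := by
    simp
  rw [hshift, sum_map]
  simp only [addRightEmbedding_apply, add_sub_cancel_right]
  refine (sum_subset ?_ fun k hk hk' => ?_).symm
  · intro k; simp only [mem_Icc]; omega
  · rw [hh.apply_eq_zero (by simp only [mem_Icc] at hk ⊢; omega) hk', mul_zero]

lemma sum_mul_fd2_of_bc {N : ℕ} {h : ℤ → ℝ} (hh : bc N h) (g : ℤ → ℝ) :
    ∑ k ∈ Icc 1 ((N : ℤ) + 2), g k * fd2 h (k - 2) = ∑ k ∈ Icc 1 (N : ℤ), fd2 g k * h k := by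
  -- `h (k - 0)` so that the `j = 0` case of `sum_mul_comp_sub_of_bc` rewrites it
  have hexpand : ∀ k, g k * fd2 h (k - 2)
      = g k * h (k - 0) - 2 * (g k * h (k - 1)) + g k * h (k - 2) := fun k => by
    simp only [fd2, sub_zero, sub_add_cancel, show k - 2 + 1 = k - 1 by ring]; ring
  simp only [hexpand, sum_add_distrib, sum_sub_distrib, ← mul_sum,
    sum_mul_comp_sub_of_bc hh g (j := 0) (m := 2) le_rfl (by norm_num) (by norm_num) (by norm_num),
    sum_mul_comp_sub_of_bc hh g (j := 1) (m := 2) (by norm_num) (by norm_num) (by norm_num)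
      (by norm_num),
    sum_mul_comp_sub_of_bc hh g (j := 2) (m := 2) (by norm_num) le_rfl le_rfl (by norm_num)]
  rw [mul_sum, ← sum_sub_distrib, ← sum_add_distrib]
  refine sum_congr rfl fun k _ => ?_
  simp only [fd2, add_zero]; ring

lemma neg_sum_mul_fd_of_bc {N : ℕ} {h : ℤ → ℝ} (hh : bc N h) (g : ℤ → ℝ) :
    -∑ k ∈ Icc 1 ((N : ℤ) + 1), g k * fd h (k - 1) = ∑ k ∈ Icc 1 (N : ℤ), fd g k * h k := by
  have hexpand : ∀ k, g k * fd h (k - 1) = g k * h (k - 0) - g k * h (k - 1) := fun k => by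
    simp only [fd, sub_zero, sub_add_cancel]; ring
  simp only [hexpand, sum_sub_distrib,
    sum_mul_comp_sub_of_bc hh g (j := 0) (m := 1) le_rfl (by norm_num) (by norm_num) (by norm_num),
    sum_mul_comp_sub_of_bc hh g (j := 1) (m := 1) (by norm_num) (by norm_num) le_rfl (by norm_num)]
  rw [neg_sub, ← sum_sub_distrib]
  refine sum_congr rfl fun k _ => ?_
  simp only [fd, add_zero]; ring

lemma fd_add_mul (y h : ℤ → ℝ) (ε : ℝ) (k : ℤ) :
    fd (fun j => y j + ε * h j) k = fd y k + ε * fd h k := by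
  simp only [fd]; ring

lemma fd2_add_mul (y h : ℤ → ℝ) (ε : ℝ) (k : ℤ) :
    fd2 (fun j => y j + ε * h j) k = fd2 y k + ε * fd2 h k := by
  simp only [fd2]; ring

lemma hasDerivAt_const_add_mul (a b x : ℝ) : HasDerivAt (fun ε : ℝ => a + ε * b) b x := by
  simpa using ((hasDerivAt_id x).mul_const b).const_add a

lemma hasDerivAt_half_mul_sq_line (c a b : ℝ) :
    HasDerivAt (fun ε : ℝ => c / 2 * (a + ε * b) ^ 2) (c * a * b) 0 := by
  refine (((hasDerivAt_const_add_mul a b 0).fun_pow 2).const_mul (c / 2)).congr_deriv ?_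
  ring

lemma hasDerivAt_Fint {f : ℤ → ℝ → ℝ} {k : ℤ} (hf : Continuous (f k)) (s : ℝ) :
    HasDerivAt (Fint f k) (f k s) s :=
  intervalIntegral.integral_hasDerivAt_right (hf.intervalIntegrable _ _)
    (hf.stronglyMeasurableAtFilter _ _) hf.continuousAt

lemma hasDerivAt_J_line (N : ℕ) (p q : ℤ → ℝ) (f : ℤ → ℝ → ℝ)
    (hf : ∀ k ∈ Icc (1 : ℤ) N, Continuous (f k)) (y h : ℤ → ℝ) :
    HasDerivAt (fun ε : ℝ => J N p q f (fun k => y k + ε * h k))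
      (∑ k ∈ Icc 1 ((N : ℤ) + 2), p k * fd2 y (k - 2) * fd2 h (k - 2)
        - ∑ k ∈ Icc 1 ((N : ℤ) + 1), q k * fd y (k - 1) * fd h (k - 1)
        + ∑ k ∈ Icc 1 (N : ℤ), f k (y k) * h k) 0 := by
  simp only [J, fd_add_mul, fd2_add_mul]
  refine .add (.sub (.fun_sum fun k _ => hasDerivAt_half_mul_sq_line _ _ _)
    (.fun_sum fun k _ => hasDerivAt_half_mul_sq_line _ _ _)) (.fun_sum fun k hk => ?_)
  have := (hasDerivAt_Fint (hf k hk) _).comp 0 (hasDerivAt_const_add_mul (y k) (h k) 0)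
  simpa [Function.comp_def] using this

theorem stmt_8_general (N : ℕ) (p q : ℤ → ℝ) (f : ℤ → ℝ → ℝ)
    (hf : ∀ k ∈ Finset.Icc (1 : ℤ) (N : ℤ), Continuous (f k))
    (y h : ℤ → ℝ) (hh : bc N h) :
    HasDerivAt (fun ε : ℝ => J N p q f (fun k => y k + ε * h k))
      (∑ k ∈ Finset.Icc (1 : ℤ) (N : ℤ),
        (fd2 (fun j => p j * fd2 y (j - 2)) k
          + fd (fun j => q j * fd y (j - 1)) k + f k (y k)) * h k) 0 := by
  convert hasDerivAt_J_line N p q f hf y h using 1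
  rw [sub_eq_add_neg, sum_mul_fd2_of_bc hh, neg_sum_mul_fd_of_bc hh]
  simp only [add_mul, sum_add_distrib]

/-- Summation-by-parts form of the Gateaux derivative:
`δJ(y;h) = ∑_{k=1}^{N} [Δ²(p(k)Δ²y(k-2)) + Δ(q(k)Δy(k-1)) + f(k,y(k))]·h(k)`. -/
theorem stmt_8 (N : ℕ) (hN : 1 ≤ N) (p q : ℤ → ℝ) (f : ℤ → ℝ → ℝ)
    (hf : ∀ k ∈ Finset.Icc (1 : ℤ) (N : ℤ), Continuous (f k))
    (y h : ℤ → ℝ) (hy : bc N y) (hh : bc N h) :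
    HasDerivAt (fun ε : ℝ => J N p q f (fun k => y k + ε * h k))
      (∑ k ∈ Finset.Icc (1 : ℤ) (N : ℤ),
        (fd2 (fun j => p j * fd2 y (j - 2)) k
          + fd (fun j => q j * fd y (j - 1)) k + f k (y k)) * h k) 0 :=
  stmt_8_general N p q f hf y h hh
end

section
/- Define I(y) = ∑_{k=1}^{N+2}(p(k)/2)(Δ²y(k-2))² − ∑_{k=1}^{N+1}(q(k)/2)(Δy(k-1))² on E. If p_min·η'(p) − q_max·η(q) > 0, then I is strongly convex on E: for all y, h ∈ E with h ≠ 0, I(y+h) − I(y) − δI(y;h) ≥ ½(p_min·η'(p) − q_max·η(q))·‖h‖² > 0. -/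
/-!
Since `I` is quadratic, `I(y + εh) = I(y) + ε·δI(y;h) + ε²·I(h)`, so the left-hand side is `I(h)`,
which is at least `p_min/2·‖Δ²h‖² − q_max/2·‖Δh‖²`. Under the boundary conditions `Δh = V x` and
`Δ²h = W x` with `x = h|Z[1,N]`, hence the Rayleigh quotient gives `λ₁‖h‖² ≤ ‖Δh‖²` and
`λ₂‖h‖² ≤ ‖Δ²h‖²`, while `(a − b)² ≤ 2a² + 2b²` gives `‖Δh‖² ≤ 4‖h‖²` and `‖Δ²h‖² ≤ 16‖h‖²`.
Which of the two bounds to use is dictated by the signs of `p_min` and `q_max`.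
-/

open Finset Matrix

open Matrix

/-- The (N+1)×N first-difference matrix under zero boundary conditions. -/
def Vmat (N : ℕ) : Matrix (Fin (N + 1)) (Fin N) ℝ := fun i j =>
  if (i : ℕ) = (j : ℕ) then 1 else if (i : ℕ) = (j : ℕ) + 1 then -1 else 0

/-- The (N+2)×N second-difference matrix under zero boundary conditions. -/
def Wmat (N : ℕ) : Matrix (Fin (N + 2)) (Fin N) ℝ := fun i j =>
  if (i : ℕ) = (j : ℕ) then 1
  else if (i : ℕ) = (j : ℕ) + 1 then -2
  else if (i : ℕ) = (j : ℕ) + 2 then 1 else 0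

/-- `lam` is the smallest eigenvalue of the matrix `M`. -/
def IsSmallestEigenvalue {n : ℕ} (M : Matrix (Fin n) (Fin n) ℝ) (lam : ℝ) : Prop :=
  IsLeast {μ : ℝ | ∃ x : Fin n → ℝ, x ≠ 0 ∧ M.mulVec x = μ • x} lam

/-- The quadratic part `I(y) = ∑ (p(k)/2)(Δ²y(k-2))² − ∑ (q(k)/2)(Δy(k-1))²`. -/
noncomputable def Iq (N : ℕ) (p q : ℤ → ℝ) (y : ℤ → ℝ) : ℝ :=
  ∑ k ∈ Finset.Icc (1 : ℤ) ((N : ℤ) + 2), p k / 2 * (fd2 y (k - 2)) ^ 2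
    - ∑ k ∈ Finset.Icc (1 : ℤ) ((N : ℤ) + 1), q k / 2 * (fd y (k - 1)) ^ 2

lemma dotProduct_mulVec_ge_of_mem_lowerBounds {n : Type*} [Fintype n] [DecidableEq n]
    {M : Matrix n n ℝ} (hM : M.IsHermitian) {lam : ℝ}
    (hlam : lam ∈ lowerBounds {μ : ℝ | ∃ x : n → ℝ, x ≠ 0 ∧ M *ᵥ x = μ • x}) (x : n → ℝ) :
    lam * (x ⬝ᵥ x) ≤ x ⬝ᵥ (M *ᵥ x) := by
  have hM' : (M - lam • 1).IsHermitian := hM.sub (isHermitian_one.smul (IsSelfAdjoint.all lam))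
  have hpsd : (M - lam • 1).PosSemidef := by
    -- an eigenpair `(μ, v)` of `M - lam • 1` gives the eigenpair `(μ + lam, v)` of `M`
    refine hM'.posSemidef_iff_eigenvalues_nonneg.mpr fun i => ?_
    have hv : M *ᵥ ⇑(hM'.eigenvectorBasis i)
        = (hM'.eigenvalues i + lam) • ⇑(hM'.eigenvectorBasis i) := by
      have := hM'.mulVec_eigenvectorBasis i
      rw [sub_mulVec, smul_mulVec, one_mulVec] at this
      rw [add_smul, ← this, sub_add_cancel]
    have hne : ⇑(hM'.eigenvectorBasis i) ≠ 0 := fun h0 =>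
      hM'.eigenvectorBasis.orthonormal.ne_zero i (by ext j; exact congrFun h0 j)
    simpa using hlam ⟨_, hne, hv⟩
  have := hpsd.dotProduct_mulVec_nonneg x
  simp only [star_trivial, sub_mulVec, smul_mulVec, one_mulVec, dotProduct_sub,
    dotProduct_smul, smul_eq_mul] at this
  linarith

lemma dotProduct_mulVec_self_ge_of_mem_lowerBounds {m n : Type*} [Fintype m] [Fintype n]
    [DecidableEq n] (V : Matrix m n ℝ) {lam : ℝ}
    (hlam : lam ∈ lowerBounds {μ : ℝ | ∃ x : n → ℝ, x ≠ 0 ∧ (Vᵀ * V) *ᵥ x = μ • x})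
    (x : n → ℝ) :
    lam * (x ⬝ᵥ x) ≤ (V *ᵥ x) ⬝ᵥ (V *ᵥ x) := by
  have hV : (Vᵀ * V).IsHermitian := by
    simpa using (posSemidef_conjTranspose_mul_self V).isHermitian
  have := dotProduct_mulVec_ge_of_mem_lowerBounds hV hlam x
  rwa [← mulVec_mulVec, dotProduct_mulVec, vecMul_transpose, dotProduct_comm] at this

lemma sum_Icc_one_eq_sum_fin (n : ℕ) (f : ℤ → ℝ) :
    ∑ k ∈ Icc (1 : ℤ) n, f k = ∑ j : Fin n, f (j + 1) := by
  rw [Fin.sum_univ_eq_sum_range (fun j : ℕ => f (j + 1))]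
  refine (sum_nbij' (fun j : ℕ => (j : ℤ) + 1) (fun k => (k - 1).toNat) ?_ ?_ ?_ ?_ ?_).symm <;>
    intros <;> simp_all <;> omega

lemma sum_Icc_one_sq_eq_dotProduct (n : ℕ) (f : ℤ → ℝ) :
    ∑ k ∈ Icc (1 : ℤ) n, f k ^ 2 = (fun j : Fin n => f (j + 1)) ⬝ᵥ fun j => f (j + 1) := by
  simp [sum_Icc_one_eq_sum_fin, dotProduct, sq]

section BoundaryConditions

variable {N : ℕ} {h : ℤ → ℝ}

-- `fun j : Fin N => h (j + 1)` is `h` on `Z[1,N]`; the four boundary zeros account for the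
-- indices that a shift by `d ≤ 2` pushes out of range.
lemma sum_fin_ite_eq_of_bc (hh : bc N h) {m d : ℕ} (hd : d ≤ 2) (hm : m ≤ N + 1) :
    ∑ j : Fin N, (if m = j + d then h (j + 1) else 0) = h (m + 1 - d) := by
  obtain ⟨h₁, h₂, h₃, h₄⟩ := hh
  by_cases hj : d ≤ m ∧ m - d < N
  · rw [sum_eq_single ⟨m - d, hj.2⟩
      (fun j _ hj' => if_neg fun e => hj' (Fin.ext (by simp; omega))) (by simp),
      if_pos (by simp; omega)]
    congr 1
    push_cast [hj.1]
    ring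
  · rw [sum_eq_zero fun j _ => if_neg (by omega)]
    have : (m : ℤ) + 1 - d = -1 ∨ (m : ℤ) + 1 - d = 0 ∨ (m : ℤ) + 1 - d = N + 1 ∨
        (m : ℤ) + 1 - d = N + 2 := by omega
    rcases this with h' | h' | h' | h' <;> simp [h', h₁, h₂, h₃, h₄]

lemma Vmat_mulVec_of_bc (hh : bc N h) (i : Fin (N + 1)) :
    (Vmat N *ᵥ fun j => h (j + 1)) i = fd h i := by
  have hsplit : ∀ j : Fin N, Vmat N i j * h (j + 1)
      = (if (i : ℕ) = j + 0 then h (j + 1) else 0)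
        - (if (i : ℕ) = j + 1 then h (j + 1) else 0) := by
    intro j
    unfold Vmat
    split_ifs <;> first | omega | ring
  rw [mulVec, dotProduct]
  simp only [hsplit, sum_sub_distrib]
  rw [sum_fin_ite_eq_of_bc hh (by norm_num) (by omega),
    sum_fin_ite_eq_of_bc hh (by norm_num) (by omega), fd]
  push_cast
  ring_nf

lemma Wmat_mulVec_of_bc (hh : bc N h) (i : Fin (N + 2)) :
    (Wmat N *ᵥ fun j => h (j + 1)) i = fd2 h (i - 1) := by
  have hsplit : ∀ j : Fin N, Wmat N i j * h (j + 1)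
      = (if (i : ℕ) = j + 0 then h (j + 1) else 0)
        - 2 * (if (i : ℕ) = j + 1 then h (j + 1) else 0)
        + (if (i : ℕ) = j + 2 then h (j + 1) else 0) := by
    intro j
    unfold Wmat
    split_ifs <;> first | omega | ring
  rw [mulVec, dotProduct]
  simp only [hsplit, sum_add_distrib, sum_sub_distrib, ← mul_sum]
  rw [sum_fin_ite_eq_of_bc hh (by norm_num) (by omega),
    sum_fin_ite_eq_of_bc hh (by norm_num) (by omega),
    sum_fin_ite_eq_of_bc hh (by norm_num) (by omega), fd2]
  push_cast
  ring_nf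

lemma sum_Icc_sub_sq_eq_of_bc (hh : bc N h) {a b c : ℤ}
    (ha : -1 ≤ a - c ∧ a - c ≤ 1) (hb : N ≤ b - c ∧ b - c ≤ N + 2) :
    ∑ k ∈ Icc a b, h (k - c) ^ 2 = ∑ k ∈ Icc (1 : ℤ) N, h k ^ 2 := by
  obtain ⟨h₁, h₂, h₃, h₄⟩ := hh
  rw [sum_nbij' (· - c) (· + c) (by intros; simp_all) (by intros; simp_all; omega)
    (by simp) (by simp) (fun _ _ => rfl) (t := Icc (a - c) (b - c)) (g := fun k => h k ^ 2)]
  refine (sum_subset (fun k hk => ?_) fun k hk hk' => ?_).symm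
  · simp only [mem_Icc] at *; omega
  · simp only [mem_Icc] at hk hk'
    have : k = -1 ∨ k = 0 ∨ k = N + 1 ∨ k = N + 2 := by omega
    rcases this with rfl | rfl | rfl | rfl <;> simp [h₁, h₂, h₃, h₄]

lemma mul_sum_sq_le_sum_sq_fd (hh : bc N h) {lam : ℝ}
    (hlam : IsSmallestEigenvalue ((Vmat N)ᵀ * Vmat N) lam) :
    lam * ∑ k ∈ Icc (1 : ℤ) N, h k ^ 2 ≤ ∑ k ∈ Icc (1 : ℤ) (N + 1), fd h (k - 1) ^ 2 := by
  have hV : (fun i : Fin (N + 1) => fd h (i + 1 - 1)) = Vmat N *ᵥ fun j => h (j + 1) := by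
    ext i
    rw [Vmat_mulVec_of_bc hh, add_sub_cancel_right]
  rw [sum_Icc_one_sq_eq_dotProduct, ← Nat.cast_succ, sum_Icc_one_sq_eq_dotProduct, hV]
  exact dotProduct_mulVec_self_ge_of_mem_lowerBounds _ hlam.2 _

lemma mul_sum_sq_le_sum_sq_fd2 (hh : bc N h) {lam : ℝ}
    (hlam : IsSmallestEigenvalue ((Wmat N)ᵀ * Wmat N) lam) :
    lam * ∑ k ∈ Icc (1 : ℤ) N, h k ^ 2 ≤ ∑ k ∈ Icc (1 : ℤ) (N + 2), fd2 h (k - 2) ^ 2 := by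
  have hW : (fun i : Fin (N + 2) => fd2 h (i + 1 - 2)) = Wmat N *ᵥ fun j => h (j + 1) := by
    ext i
    rw [Wmat_mulVec_of_bc hh]
    ring_nf
  rw [sum_Icc_one_sq_eq_dotProduct, show (N : ℤ) + 2 = (N + 2 : ℕ) by push_cast; rfl,
    sum_Icc_one_sq_eq_dotProduct, hW]
  exact dotProduct_mulVec_self_ge_of_mem_lowerBounds _ hlam.2 _

lemma sum_sq_fd_le (hh : bc N h) :
    ∑ k ∈ Icc (1 : ℤ) (N + 1), fd h (k - 1) ^ 2 ≤ 4 * ∑ k ∈ Icc (1 : ℤ) N, h k ^ 2 := by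
  have hpt : ∀ k : ℤ, fd h (k - 1) ^ 2 ≤ 2 * h (k - 0) ^ 2 + 2 * h (k - 1) ^ 2 := fun k => by
    simp only [fd, sub_add_cancel, sub_zero]
    nlinarith [sq_nonneg (h k + h (k - 1))]
  calc _ ≤ ∑ k ∈ Icc (1 : ℤ) (N + 1), (2 * h (k - 0) ^ 2 + 2 * h (k - 1) ^ 2) :=
        sum_le_sum fun k _ => hpt k
    _ = 4 * ∑ k ∈ Icc (1 : ℤ) N, h k ^ 2 := by
      rw [sum_add_distrib, ← mul_sum, ← mul_sum,
        sum_Icc_sub_sq_eq_of_bc hh (by omega) (by omega),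
        sum_Icc_sub_sq_eq_of_bc hh (by omega) (by omega)]
      ring

lemma sum_sq_fd2_le (hh : bc N h) :
    ∑ k ∈ Icc (1 : ℤ) (N + 2), fd2 h (k - 2) ^ 2 ≤ 16 * ∑ k ∈ Icc (1 : ℤ) N, h k ^ 2 := by
  have hpt : ∀ k : ℤ,
      fd2 h (k - 2) ^ 2 ≤ 4 * h (k - 0) ^ 2 + 8 * h (k - 1) ^ 2 + 4 * h (k - 2) ^ 2 := fun k => by
    simp only [fd2, sub_zero, show k - 2 + 2 = k by ring, show k - 2 + 1 = k - 1 by ring]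
    nlinarith [sq_nonneg (h k + h (k - 1)), sq_nonneg (h (k - 1) + h (k - 2)),
      sq_nonneg (h k - h (k - 2))]
  calc _ ≤ ∑ k ∈ Icc (1 : ℤ) (N + 2),
          (4 * h (k - 0) ^ 2 + 8 * h (k - 1) ^ 2 + 4 * h (k - 2) ^ 2) :=
        sum_le_sum fun k _ => hpt k
    _ = 16 * ∑ k ∈ Icc (1 : ℤ) N, h k ^ 2 := by
      rw [sum_add_distrib, sum_add_distrib, ← mul_sum, ← mul_sum, ← mul_sum,
        sum_Icc_sub_sq_eq_of_bc hh (by omega) (by omega),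
        sum_Icc_sub_sq_eq_of_bc hh (by omega) (by omega),
        sum_Icc_sub_sq_eq_of_bc hh (by omega) (by omega)]
      ring

end BoundaryConditions

lemma sum_half_mul_add_mul_sq {ι : Type*} (s : Finset ι) (w a b : ι → ℝ) (ε : ℝ) :
    ∑ k ∈ s, w k / 2 * (a k + ε * b k) ^ 2
      = ∑ k ∈ s, w k / 2 * a k ^ 2 + ε * ∑ k ∈ s, w k * a k * b k
        + ε ^ 2 * ∑ k ∈ s, w k / 2 * b k ^ 2 := by
  rw [mul_sum, mul_sum, ← sum_add_distrib, ← sum_add_distrib]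
  exact sum_congr rfl fun k _ => by ring

lemma exists_Iq_add_mul_eq (N : ℕ) (p q y h : ℤ → ℝ) :
    ∃ B : ℝ, ∀ ε : ℝ,
      Iq N p q (fun k => y k + ε * h k) = Iq N p q y + ε * B + ε ^ 2 * Iq N p q h := by
  refine ⟨∑ k ∈ Icc (1 : ℤ) (N + 2), p k * fd2 y (k - 2) * fd2 h (k - 2)
    - ∑ k ∈ Icc (1 : ℤ) (N + 1), q k * fd y (k - 1) * fd h (k - 1), fun ε => ?_⟩
  have hfd : ∀ m, fd (fun k => y k + ε * h k) m = fd y m + ε * fd h m := fun m => by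
    simp only [fd]; ring
  have hfd2 : ∀ m, fd2 (fun k => y k + ε * h k) m = fd2 y m + ε * fd2 h m := fun m => by
    simp only [fd2]; ring
  simp only [Iq, hfd, hfd2, sum_half_mul_add_mul_sq]
  ring

lemma Iq_add_sub_sub_eq_of_hasDerivAt {N : ℕ} {p q y h : ℤ → ℝ} {L : ℝ}
    (hL : HasDerivAt (fun ε : ℝ => Iq N p q (fun k => y k + ε * h k)) L 0) :
    Iq N p q (fun k => y k + h k) - Iq N p q y - L = Iq N p q h := by
  obtain ⟨B, hB⟩ := exists_Iq_add_mul_eq N p q y h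
  have hpoly : HasDerivAt (fun ε : ℝ => Iq N p q y + ε * B + ε ^ 2 * Iq N p q h) B 0 := by
    have hlin : HasDerivAt (fun ε : ℝ => ε * B) B 0 := by
      simpa using (hasDerivAt_id (0 : ℝ)).mul_const B
    have hsq : HasDerivAt (fun ε : ℝ => ε ^ 2 * Iq N p q h) 0 0 := by
      simpa using (hasDerivAt_pow 2 (0 : ℝ)).mul_const (Iq N p q h)
    have := (hlin.const_add (Iq N p q y)).add hsq
    rwa [add_zero] at this
  rw [funext hB] at hL
  have h1 := hB 1
  simp only [one_mul, one_pow] at h1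
  rw [h1, hL.unique hpoly]
  ring

lemma half_mul_sum_sq_fd2_sub_le_Iq {N : ℕ} {p q : ℤ → ℝ} {pmin qmax : ℝ}
    (hp : pmin ∈ lowerBounds (p '' Set.Icc (1 : ℤ) (N + 2)))
    (hq : qmax ∈ upperBounds (q '' Set.Icc (1 : ℤ) (N + 1))) (h : ℤ → ℝ) :
    pmin / 2 * ∑ k ∈ Icc (1 : ℤ) (N + 2), fd2 h (k - 2) ^ 2
        - qmax / 2 * ∑ k ∈ Icc (1 : ℤ) (N + 1), fd h (k - 1) ^ 2
      ≤ Iq N p q h := by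
  rw [mul_sum, mul_sum]
  refine sub_le_sub (sum_le_sum fun k hk => ?_) (sum_le_sum fun k hk => ?_)
  · have := hp ⟨k, by simpa using hk, rfl⟩
    gcongr
  · have := hq ⟨k, by simpa using hk, rfl⟩
    gcongr

lemma mul_ite_nonneg_mul_le {a l u T S : ℝ} (hl : l * T ≤ S) (hu : S ≤ u * T) :
    a * (if 0 ≤ a then l else u) * T ≤ a * S := by
  split_ifs with ha <;> nlinarith

lemma mul_le_mul_ite_neg_mul {a l u T S : ℝ} (hl : l * T ≤ S) (hu : S ≤ u * T) :
    a * S ≤ a * (if a < 0 then l else u) * T := by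
  split_ifs with ha <;> nlinarith

theorem stmt_12_general (N : ℕ) (p q : ℤ → ℝ)
    (lam1 lam2 : ℝ)
    (hlam1 : IsSmallestEigenvalue ((Vmat N)ᵀ * Vmat N) lam1)
    (hlam2 : IsSmallestEigenvalue ((Wmat N)ᵀ * Wmat N) lam2)
    (pmin qmax : ℝ)
    (hpmin : IsLeast (p '' Set.Icc (1 : ℤ) ((N : ℤ) + 2)) pmin)
    (hqmax : IsGreatest (q '' Set.Icc (1 : ℤ) ((N : ℤ) + 1)) qmax)
    (hcond : 0 < pmin * (if 0 ≤ pmin then lam2 else 16)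
        - qmax * (if qmax < 0 then lam1 else 4))
    (y h : ℤ → ℝ) (hh : bc N h)
    (hne : ∃ k ∈ Finset.Icc (1 : ℤ) (N : ℤ), h k ≠ 0)
    (L : ℝ)
    (hL : HasDerivAt (fun ε : ℝ => Iq N p q (fun k => y k + ε * h k)) L 0) :
    (1 / 2) * (pmin * (if 0 ≤ pmin then lam2 else 16)
          - qmax * (if qmax < 0 then lam1 else 4))
        * ∑ k ∈ Finset.Icc (1 : ℤ) (N : ℤ), (h k) ^ 2
      ≤ Iq N p q (fun k => y k + h k) - Iq N p q y - L
    ∧ 0 < (1 / 2) * (pmin * (if 0 ≤ pmin then lam2 else 16)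
          - qmax * (if qmax < 0 then lam1 else 4))
        * ∑ k ∈ Finset.Icc (1 : ℤ) (N : ℤ), (h k) ^ 2 := by
  have hnorm : 0 < ∑ k ∈ Icc (1 : ℤ) N, h k ^ 2 := by
    obtain ⟨k, hk, hk0⟩ := hne
    exact sum_pos' (fun _ _ => sq_nonneg _) ⟨k, hk, by positivity⟩
  refine ⟨?_, mul_pos (mul_pos one_half_pos hcond) hnorm⟩
  have hIq := half_mul_sum_sq_fd2_sub_le_Iq hpmin.2 hqmax.2 h
  have hfd2 := mul_ite_nonneg_mul_le (a := pmin)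
    (mul_sum_sq_le_sum_sq_fd2 hh hlam2) (sum_sq_fd2_le hh)
  have hfd := mul_le_mul_ite_neg_mul (a := qmax)
    (mul_sum_sq_le_sum_sq_fd hh hlam1) (sum_sq_fd_le hh)
  rw [Iq_add_sub_sub_eq_of_hasDerivAt hL]
  linarith

/-- If `p_min·η'(p) − q_max·η(q) > 0` then `I` is strongly convex on `E`:
`I(y+h) − I(y) − δI(y;h) ≥ ½(p_min·η'(p) − q_max·η(q))·‖h‖² > 0` for `h ≠ 0`. -/
theorem stmt_12 (N : ℕ) (hN : 1 ≤ N) (p q : ℤ → ℝ)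
    (lam1 lam2 : ℝ)
    (hlam1 : IsSmallestEigenvalue ((Vmat N)ᵀ * Vmat N) lam1)
    (hlam2 : IsSmallestEigenvalue ((Wmat N)ᵀ * Wmat N) lam2)
    (pmin qmax : ℝ)
    (hpmin : IsLeast (p '' Set.Icc (1 : ℤ) ((N : ℤ) + 2)) pmin)
    (hqmax : IsGreatest (q '' Set.Icc (1 : ℤ) ((N : ℤ) + 1)) qmax)
    (hcond : 0 < pmin * (if 0 ≤ pmin then lam2 else 16)
        - qmax * (if qmax < 0 then lam1 else 4))
    (y h : ℤ → ℝ) (hy : bc N y) (hh : bc N h)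
    (hne : ∃ k ∈ Finset.Icc (1 : ℤ) (N : ℤ), h k ≠ 0)
    (L : ℝ)
    (hL : HasDerivAt (fun ε : ℝ => Iq N p q (fun k => y k + ε * h k)) L 0) :
    (1 / 2) * (pmin * (if 0 ≤ pmin then lam2 else 16)
          - qmax * (if qmax < 0 then lam1 else 4))
        * ∑ k ∈ Finset.Icc (1 : ℤ) (N : ℤ), (h k) ^ 2
      ≤ Iq N p q (fun k => y k + h k) - Iq N p q y - L
    ∧ 0 < (1 / 2) * (pmin * (if 0 ≤ pmin then lam2 else 16)
          - qmax * (if qmax < 0 then lam1 else 4))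
        * ∑ k ∈ Finset.Icc (1 : ℤ) (N : ℤ), (h k) ^ 2 :=
  stmt_12_general N p q lam1 lam2 hlam1 hlam2 pmin qmax hpmin hqmax hcond y h hh hne L hL
end
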